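/- For any invariant symmetric bilinear form B on 𝔥 (B([h,k],l) = B(h,[k,l])), the symmetric bilinear form on the double extension 𝔡(𝔤,𝔥) defined by ⟨(h₁,x,α),(h₂,y,β)⟩_𝔡 = ⟨x,y⟩ + α(h₂) + β(h₁) + B(h₁,h₂) is invariant: ⟨[u,v],w⟩_𝔡 = ⟨u,[v,w]⟩_𝔡 for all u,v,w ∈ 𝔡(𝔤,𝔥). -/
import Mathlib


/-- The coadjoint action of a Lie algebra on its dual: `(ad*_h β)(k) = −β([h,k])`. -/
def coad {H : Type*} [LieRing H] [LieAlgebra ℝ H] (h : H) (β : Module.Dual ℝ H) :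
    Module.Dual ℝ H :=
  -(β ∘ₗ LieAlgebra.ad ℝ H h)

/-- The cocycle `c(x,y) ∈ 𝔥*` of the double extension, `c(x,y)(k) = ⟨ρ(k)x, y⟩`. -/
def deCocycle {G H : Type*} [LieRing G] [LieAlgebra ℝ G] [LieRing H] [LieAlgebra ℝ H]
    (B : G →ₗ[ℝ] G →ₗ[ℝ] ℝ) (ρ : H →ₗ[ℝ] G →ₗ[ℝ] G) (x y : G) : Module.Dual ℝ H where
  toFun k := B (ρ k x) y
  map_add' a b := by simp
  map_smul' r a := by simp

/-- The bracket of the double extension `𝔡(𝔤,𝔥) = 𝔥 × 𝔤 × 𝔥*`: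
`[(h₁,x,α),(h₂,y,β)] =
  ([h₁,h₂], [x,y] + ρ(h₁)y − ρ(h₂)x, c(x,y) + ad*_{h₁}β − ad*_{h₂}α)`. -/
def deBracket {G H : Type*} [LieRing G] [LieAlgebra ℝ G] [LieRing H] [LieAlgebra ℝ H]
    (B : G →ₗ[ℝ] G →ₗ[ℝ] ℝ) (ρ : H →ₗ[ℝ] G →ₗ[ℝ] G)
    (p q : H × G × Module.Dual ℝ H) : H × G × Module.Dual ℝ H :=
  (⁅p.1, q.1⁆,
   ⁅p.2.1, q.2.1⁆ + ρ p.1 q.2.1 - ρ q.1 p.2.1,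
   deCocycle B ρ p.2.1 q.2.1 + coad p.1 q.2.2 - coad q.1 p.2.2)

/-- The scalar product of the double extension:
`⟨(h₁,x,α),(h₂,y,β)⟩ = ⟨x,y⟩ + α(h₂) + β(h₁) + B_𝔥(h₁,h₂)`. -/
def deForm {G H : Type*} [LieRing G] [LieAlgebra ℝ G] [LieRing H] [LieAlgebra ℝ H]
    (B : G →ₗ[ℝ] G →ₗ[ℝ] ℝ) (Bh : H →ₗ[ℝ] H →ₗ[ℝ] ℝ)
    (p q : H × G × Module.Dual ℝ H) : ℝ :=
  B p.2.1 q.2.1 + p.2.2 q.1 + q.2.2 p.1 + Bh p.1 q.1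

/-- For any invariant symmetric bilinear form `B_𝔥` on `𝔥`, the symmetric bilinear form
`⟨(h₁,x,α),(h₂,y,β)⟩ = ⟨x,y⟩ + α(h₂) + β(h₁) + B_𝔥(h₁,h₂)` on the double extension
`𝔡(𝔤,𝔥)` is invariant: `⟨[u,v],w⟩ = ⟨u,[v,w]⟩`. -/
theorem deForm_invariant
    {G H : Type*} [LieRing G] [LieAlgebra ℝ G] [LieRing H] [LieAlgebra ℝ H]
    [FiniteDimensional ℝ H]
    (B : G →ₗ[ℝ] G →ₗ[ℝ] ℝ)
    (hB_symm : ∀ x y : G, B x y = B y x)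
    (hB_inv : ∀ x y z : G, B ⁅x, y⁆ z = B x ⁅y, z⁆)
    (ρ : H →ₗ[ℝ] G →ₗ[ℝ] G)
    (hρ_rep : ∀ h k : H, ρ ⁅h, k⁆ = ρ h ∘ₗ ρ k - ρ k ∘ₗ ρ h)
    (hρ_der : ∀ (h : H) (x y : G), ρ h ⁅x, y⁆ = ⁅ρ h x, y⁆ + ⁅x, ρ h y⁆)
    (hρ_skew : ∀ (h : H) (x y : G), B (ρ h x) y = - B x (ρ h y))
    (Bh : H →ₗ[ℝ] H →ₗ[ℝ] ℝ)
    (hBh_symm : ∀ h k : H, Bh h k = Bh k h)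
    (hBh_inv : ∀ h k l : H, Bh ⁅h, k⁆ l = Bh h ⁅k, l⁆) :
    ∀ u v w : H × G × Module.Dual ℝ H,
      deForm B Bh (deBracket B ρ u v) w = deForm B Bh u (deBracket B ρ v w) := by
  rintro ⟨h1, x, α⟩ ⟨h2, y, β⟩ ⟨h3, z, γ⟩
  simp only [deForm, deBracket, deCocycle, coad, LinearMap.coe_mk, AddHom.coe_mk,
    LinearMap.sub_apply, LinearMap.add_apply, LinearMap.neg_apply, LinearMap.comp_apply,
    LieAlgebra.ad_apply, Function.comp_apply, map_add, map_sub]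
  rw [hB_inv, hρ_skew h2 x z, hρ_skew h3 x y, hBh_inv, ← lie_skew h2 h1, ← lie_skew h3 h1,
    map_neg, map_neg]
  ring
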